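/- arXiv:0911.3556 — 3 statements merged into one kernel-verified Lean document; each statement's English description precedes it below -/
import Mathlib

section
/- The explicitly given operators on the 8-dimensional space W define a representation of the derived Kac–Moody algebra of type D₄⁽³⁾: for all i,j ∈ {0,1,2} one has [hᵢ,eⱼ] = a_{ij}·eⱼ, [hᵢ,fⱼ] = −a_{ij}·fⱼ, [eᵢ,fⱼ] = δ_{ij}·hᵢ, and for all i ≠ j the Serre relations (ad eᵢ)^{1−a_{ij}}(eⱼ) = 0 and (ad fᵢ)^{1−a_{ij}}(fⱼ) = 0 hold, where [·,·] is the commutator of linear operators and ad u (v) = [u,v]. -/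
/-!
STATEMENT 0: The explicit operators on the 8-dimensional space `W = ℂ⁸`
(with ordered basis (v₁, v₂, v₃, v₀, ∅, v̄₃, v̄₂, v̄₁)) define a representation
of the derived Kac–Moody algebra of type D₄⁽³⁾.
-/

open Matrix

noncomputable section

/-- Weight triples ⟨αᵢ^∨, wt(m)⟩ of the basis vectors, in the order
(v₁, v₂, v₃, v₀, ∅, v̄₃, v̄₂, v̄₁); the outer index is i ∈ {0,1,2}. -/
def wtD34 : Fin 3 → Fin 8 → ℤ :=
  ![![-2, -1, -1, 0, 0, 1, 1, 2],
    ![1, -1, 2, 0, 0, -2, 1, -1],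
    ![0, 1, -1, 0, 0, 1, -1, 0]]

/-- The diagonal operator hᵢ acting on basis vector m by ⟨αᵢ^∨, wt(m)⟩. -/
def hOp (i : Fin 3) : Matrix (Fin 8) (Fin 8) ℂ :=
  Matrix.diagonal fun m => (wtD34 i m : ℂ)

/-- f₀ : v₀↦v₁, v̄₃↦v₂, v̄₂↦v₃, v̄₁↦∅+(1/2)v₀, ∅↦(3/2)v₁. -/
def f0 : Matrix (Fin 8) (Fin 8) ℂ :=
  !![0,0,0,1,3/2,0,0,0;
     0,0,0,0,0,1,0,0;
     0,0,0,0,0,0,1,0;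
     0,0,0,0,0,0,0,1/2;
     0,0,0,0,0,0,0,1;
     0,0,0,0,0,0,0,0;
     0,0,0,0,0,0,0,0;
     0,0,0,0,0,0,0,0]

/-- f₁ : v₁↦v₂, v₃↦v₀, v₀↦2v̄₃, v̄₂↦v̄₁. -/
def f1 : Matrix (Fin 8) (Fin 8) ℂ :=
  !![0,0,0,0,0,0,0,0;
     1,0,0,0,0,0,0,0;
     0,0,0,0,0,0,0,0;
     0,0,1,0,0,0,0,0;
     0,0,0,0,0,0,0,0;
     0,0,0,2,0,0,0,0;
     0,0,0,0,0,0,0,0;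
     0,0,0,0,0,0,1,0]

/-- f₂ : v₂↦v₃, v̄₃↦v̄₂. -/
def f2 : Matrix (Fin 8) (Fin 8) ℂ :=
  !![0,0,0,0,0,0,0,0;
     0,0,0,0,0,0,0,0;
     0,1,0,0,0,0,0,0;
     0,0,0,0,0,0,0,0;
     0,0,0,0,0,0,0,0;
     0,0,0,0,0,0,0,0;
     0,0,0,0,0,1,0,0;
     0,0,0,0,0,0,0,0]

/-- e₀ : v₁↦∅+(1/2)v₀, v₂↦v̄₃, v₃↦v̄₂, v₀↦v̄₁, ∅↦(3/2)v̄₁. -/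
def e0 : Matrix (Fin 8) (Fin 8) ℂ :=
  !![0,0,0,0,0,0,0,0;
     0,0,0,0,0,0,0,0;
     0,0,0,0,0,0,0,0;
     1/2,0,0,0,0,0,0,0;
     1,0,0,0,0,0,0,0;
     0,1,0,0,0,0,0,0;
     0,0,1,0,0,0,0,0;
     0,0,0,1,3/2,0,0,0]

/-- e₁ : v₂↦v₁, v₀↦2v₃, v̄₃↦v₀, v̄₁↦v̄₂. -/
def e1 : Matrix (Fin 8) (Fin 8) ℂ :=
  !![0,1,0,0,0,0,0,0;
     0,0,0,0,0,0,0,0;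
     0,0,0,2,0,0,0,0;
     0,0,0,0,0,1,0,0;
     0,0,0,0,0,0,0,0;
     0,0,0,0,0,0,0,0;
     0,0,0,0,0,0,0,1;
     0,0,0,0,0,0,0,0]

/-- e₂ : v₃↦v₂, v̄₂↦v̄₃. -/
def e2 : Matrix (Fin 8) (Fin 8) ℂ :=
  !![0,0,0,0,0,0,0,0;
     0,0,1,0,0,0,0,0;
     0,0,0,0,0,0,0,0;
     0,0,0,0,0,0,0,0;
     0,0,0,0,0,0,0,0;
     0,0,0,0,0,0,1,0;
     0,0,0,0,0,0,0,0;
     0,0,0,0,0,0,0,0]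

/-- The Cartan matrix of type D₄⁽³⁾. -/
def cartanD34 : Matrix (Fin 3) (Fin 3) ℤ := !![2,-1,0; -1,2,-3; 0,-1,2]

def eOp : Fin 3 → Matrix (Fin 8) (Fin 8) ℂ := ![e0, e1, e2]

def fOp : Fin 3 → Matrix (Fin 8) (Fin 8) ℂ := ![f0, f1, f2]

/-- The commutator `[u, v] = u v - v u` of linear operators, i.e. `ad u (v)`. -/
def ad (u v : Matrix (Fin 8) (Fin 8) ℂ) : Matrix (Fin 8) (Fin 8) ℂ := u * v - v * u

/-!
All the operators have rational entries, and the entrywise cast `ℚ → ℂ` is a ring homomorphism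
of matrix rings, hence commutes with commutators. So every relation is the image of the same
relation between rational matrices, and those are finite computations that the kernel carries out.
-/

theorem RingHom.map_lie {R S : Type*} [Ring R] [Ring S] (φ : R →+* S) (a b : R) :
    φ ⁅a, b⁆ = ⁅φ a, φ b⁆ := by
  simp only [Ring.lie_def, map_sub, map_mul]

theorem RingHom.map_iterate_lie {R S : Type*} [Ring R] [Ring S] (φ : R →+* S) (a b : R) (n : ℕ) :
    φ ((fun x => ⁅a, x⁆)^[n] b) = (fun y => ⁅φ a, y⁆)^[n] (φ b) :=
  Function.Semiconj.iterate_right (φ.map_lie a) n b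

theorem ad_eq_lie (u : Matrix (Fin 8) (Fin 8) ℂ) : ad u = fun v => ⁅u, v⁆ :=
  funext fun v => (Ring.lie_def u v).symm

def eRat : Fin 3 → Matrix (Fin 8) (Fin 8) ℚ :=
  ![!![0,0,0,0,0,0,0,0; 0,0,0,0,0,0,0,0; 0,0,0,0,0,0,0,0; 1/2,0,0,0,0,0,0,0;
      1,0,0,0,0,0,0,0; 0,1,0,0,0,0,0,0; 0,0,1,0,0,0,0,0; 0,0,0,1,3/2,0,0,0],
    !![0,1,0,0,0,0,0,0; 0,0,0,0,0,0,0,0; 0,0,0,2,0,0,0,0; 0,0,0,0,0,1,0,0;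
      0,0,0,0,0,0,0,0; 0,0,0,0,0,0,0,0; 0,0,0,0,0,0,0,1; 0,0,0,0,0,0,0,0],
    !![0,0,0,0,0,0,0,0; 0,0,1,0,0,0,0,0; 0,0,0,0,0,0,0,0; 0,0,0,0,0,0,0,0;
      0,0,0,0,0,0,0,0; 0,0,0,0,0,0,1,0; 0,0,0,0,0,0,0,0; 0,0,0,0,0,0,0,0]]

def fRat : Fin 3 → Matrix (Fin 8) (Fin 8) ℚ :=
  ![!![0,0,0,1,3/2,0,0,0; 0,0,0,0,0,1,0,0; 0,0,0,0,0,0,1,0; 0,0,0,0,0,0,0,1/2;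
      0,0,0,0,0,0,0,1; 0,0,0,0,0,0,0,0; 0,0,0,0,0,0,0,0; 0,0,0,0,0,0,0,0],
    !![0,0,0,0,0,0,0,0; 1,0,0,0,0,0,0,0; 0,0,0,0,0,0,0,0; 0,0,1,0,0,0,0,0;
      0,0,0,0,0,0,0,0; 0,0,0,2,0,0,0,0; 0,0,0,0,0,0,0,0; 0,0,0,0,0,0,1,0],
    !![0,0,0,0,0,0,0,0; 0,0,0,0,0,0,0,0; 0,1,0,0,0,0,0,0; 0,0,0,0,0,0,0,0;
      0,0,0,0,0,0,0,0; 0,0,0,0,0,0,0,0; 0,0,0,0,0,1,0,0; 0,0,0,0,0,0,0,0]]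

def hRat (i : Fin 3) : Matrix (Fin 8) (Fin 8) ℚ :=
  diagonal fun m => (wtD34 i m : ℚ)

theorem hOp_eq_map_hRat (i : Fin 3) : hOp i = (Rat.castHom ℂ).mapMatrix (hRat i) := by
  rw [RingHom.mapMatrix_apply, hOp, hRat, diagonal_map (map_zero _)]
  simp only [Rat.coe_castHom, Rat.cast_intCast]

theorem eOp_eq_map_eRat (j : Fin 3) : eOp j = (Rat.castHom ℂ).mapMatrix (eRat j) := by
  ext a b
  fin_cases j <;> fin_cases a <;> fin_cases b <;> norm_num [eOp, eRat, e0, e1, e2]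

theorem fOp_eq_map_fRat (j : Fin 3) : fOp j = (Rat.castHom ℂ).mapMatrix (fRat j) := by
  ext a b
  fin_cases j <;> fin_cases a <;> fin_cases b <;> norm_num [fOp, fRat, f0, f1, f2]

theorem lie_hRat_eRat : ∀ i j : Fin 3, ⁅hRat i, eRat j⁆ = cartanD34 i j • eRat j := by
  decide +kernel

theorem lie_hRat_fRat : ∀ i j : Fin 3, ⁅hRat i, fRat j⁆ = -cartanD34 i j • fRat j := by
  decide +kernel

theorem lie_eRat_fRat : ∀ i j : Fin 3, ⁅eRat i, fRat j⁆ = if i = j then hRat i else 0 := by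
  decide +kernel

theorem serre_eRat : ∀ i j : Fin 3, i ≠ j →
    (fun X => ⁅eRat i, X⁆)^[(1 - cartanD34 i j).toNat] (eRat j) = 0 := by
  decide +kernel

theorem serre_fRat : ∀ i j : Fin 3, i ≠ j →
    (fun X => ⁅fRat i, X⁆)^[(1 - cartanD34 i j).toNat] (fRat j) = 0 := by
  decide +kernel

theorem D34_fundamental_representation :
    (∀ i j : Fin 3, ad (hOp i) (eOp j) = (cartanD34 i j : ℂ) • eOp j) ∧
    (∀ i j : Fin 3, ad (hOp i) (fOp j) = -(cartanD34 i j : ℂ) • fOp j) ∧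
    (∀ i j : Fin 3, ad (eOp i) (fOp j) = if i = j then hOp i else 0) ∧
    (∀ i j : Fin 3, i ≠ j → (ad (eOp i))^[(1 - cartanD34 i j).toNat] (eOp j) = 0) ∧
    (∀ i j : Fin 3, i ≠ j → (ad (fOp i))^[(1 - cartanD34 i j).toNat] (fOp j) = 0) := by
  simp only [ad_eq_lie, hOp_eq_map_hRat, eOp_eq_map_eRat, fOp_eq_map_fRat, ← RingHom.map_lie,
    ← RingHom.map_iterate_lie]
  refine ⟨fun i j => ?_, fun i j => ?_, fun i j => ?_, fun i j hij => ?_, fun i j hij => ?_⟩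
  · rw [lie_hRat_eRat, map_zsmul, Int.cast_smul_eq_zsmul]
  · rw [lie_hRat_fRat, map_zsmul, ← Int.cast_neg, Int.cast_smul_eq_zsmul]
  · rw [lie_eRat_fRat, apply_ite (Rat.castHom ℂ).mapMatrix, map_zero]
  · rw [serre_eRat i j hij, map_zero]
  · rw [serre_fRat i j hij, map_zero]
end
end

section
/- The rational function γ₀ rescales by c^{−1} under the explicit action e₁^c: for all c ∈ ℂ^× and all x ∈ (ℂ^×)⁶ where the expressions are defined, 𝒞₁·𝒞₃·𝒞₅ = c, and consequently γ₀(e₁^c(x)) = c^{−1}·γ₀(x), where γ₀(x) = x₀²/(x₁x₃x₅) and e₁^c(x) = (x₀, 𝒞₁x₁, x₂, 𝒞₃x₃, x₄, 𝒞₅x₅). -/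
noncomputable section

/-- Denominator of 𝒞₁ (also the function ε₁): x₀/x₁ + x₀x₂/(x₁²x₃) + x₀x₂x₄/(x₁²x₃²x₅). -/
def s1 (x : Fin 6 → ℂ) : ℂ :=
  x 0 / x 1 + x 0 * x 2 / ((x 1) ^ 2 * x 3) + x 0 * x 2 * x 4 / ((x 1) ^ 2 * (x 3) ^ 2 * x 5)

/-- Numerator of 𝒞₁ = denominator of 𝒞₃. -/
def d3 (c : ℂ) (x : Fin 6 → ℂ) : ℂ :=
  c * x 0 / x 1 + x 0 * x 2 / ((x 1) ^ 2 * x 3) + x 0 * x 2 * x 4 / ((x 1) ^ 2 * (x 3) ^ 2 * x 5)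

/-- Numerator of 𝒞₃ = denominator of 𝒞₅. -/
def d5 (c : ℂ) (x : Fin 6 → ℂ) : ℂ :=
  c * x 0 / x 1 + c * x 0 * x 2 / ((x 1) ^ 2 * x 3)
    + x 0 * x 2 * x 4 / ((x 1) ^ 2 * (x 3) ^ 2 * x 5)

/-- 𝒞₁, 𝒞₃, 𝒞₅. -/
def C1 (c : ℂ) (x : Fin 6 → ℂ) : ℂ := d3 c x / s1 x
def C3 (c : ℂ) (x : Fin 6 → ℂ) : ℂ := d5 c x / d3 c x
def C5 (c : ℂ) (x : Fin 6 → ℂ) : ℂ := c * s1 x / d5 c x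

/-- Denominator of 𝒞₂ (also the function ε₂): x₁³/x₂ + x₁³x₃³/(x₂²x₄). -/
def s2 (x : Fin 6 → ℂ) : ℂ :=
  (x 1) ^ 3 / x 2 + (x 1) ^ 3 * (x 3) ^ 3 / ((x 2) ^ 2 * x 4)

/-- Numerator of 𝒞₂ = denominator of 𝒞₄. -/
def d4 (c : ℂ) (x : Fin 6 → ℂ) : ℂ :=
  c * (x 1) ^ 3 / x 2 + (x 1) ^ 3 * (x 3) ^ 3 / ((x 2) ^ 2 * x 4)

/-- 𝒞₂, 𝒞₄. -/
def C2 (c : ℂ) (x : Fin 6 → ℂ) : ℂ := d4 c x / s2 x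
def C4 (c : ℂ) (x : Fin 6 → ℂ) : ℂ := c * s2 x / d4 c x

/-- The action e₁^c(x) := (x₀, 𝒞₁x₁, x₂, 𝒞₃x₃, x₄, 𝒞₅x₅). -/
def e1act (c : ℂ) (x : Fin 6 → ℂ) : Fin 6 → ℂ :=
  ![x 0, C1 c x * x 1, x 2, C3 c x * x 3, x 4, C5 c x * x 5]

/-- The action e₂^c(x) := (x₀, x₁, 𝒞₂x₂, x₃, 𝒞₄x₄, x₅). -/
def e2act (c : ℂ) (x : Fin 6 → ℂ) : Fin 6 → ℂ :=
  ![x 0, x 1, C2 c x * x 2, x 3, C4 c x * x 4, x 5]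

def gamma0 (x : Fin 6 → ℂ) : ℂ := x 0 ^ 2 / (x 1 * x 3 * x 5)

theorem C1_mul_C3_mul_C5 (c : ℂ) (x : Fin 6 → ℂ) (hs1 : s1 x ≠ 0) (hd3 : d3 c x ≠ 0)
    (hd5 : d5 c x ≠ 0) : C1 c x * C3 c x * C5 c x = c := by
  rw [C1, C3, C5, div_mul_div_cancel₀' hd3, div_mul_div_cancel₀' hd5, mul_div_cancel_right₀ c hs1]

theorem gamma0_e1act (c : ℂ) (x : Fin 6 → ℂ) :
    gamma0 (e1act c x) = (C1 c x * C3 c x * C5 c x)⁻¹ * gamma0 x := by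
  simp only [gamma0, e1act, Matrix.cons_val]
  ring

theorem gamma0_e1_rescale_general (c : ℂ) (x : Fin 6 → ℂ)
    (hs1 : s1 x ≠ 0) (hd3 : d3 c x ≠ 0) (hd5 : d5 c x ≠ 0) :
    C1 c x * C3 c x * C5 c x = c ∧
    (e1act c x 0) ^ 2 / (e1act c x 1 * e1act c x 3 * e1act c x 5) =
      c⁻¹ * ((x 0) ^ 2 / (x 1 * x 3 * x 5)) := by
  have hprod := C1_mul_C3_mul_C5 c x hs1 hd3 hd5
  refine ⟨hprod, ?_⟩
  have h := gamma0_e1act c x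
  rwa [hprod] at h

/-- 𝒞₁𝒞₃𝒞₅ = c, and consequently γ₀(e₁^c(x)) = c⁻¹·γ₀(x),
where γ₀(x) = x₀²/(x₁x₃x₅). -/
theorem gamma0_e1_rescale (c : ℂ) (hc : c ≠ 0) (x : Fin 6 → ℂ) (hx : ∀ i, x i ≠ 0)
    (hs1 : s1 x ≠ 0) (hd3 : d3 c x ≠ 0) (hd5 : d5 c x ≠ 0) :
    C1 c x * C3 c x * C5 c x = c ∧
    (e1act c x 0) ^ 2 / (e1act c x 1 * e1act c x 3 * e1act c x 5) =
      c⁻¹ * ((x 0) ^ 2 / (x 1 * x 3 * x 5)) :=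
  gamma0_e1_rescale_general c x hs1 hd3 hd5
end
end

section
/- The rational functions ε₁ and ε₂ rescale by c^{−1} under the respective explicit actions: for all c ∈ ℂ^× and all x ∈ (ℂ^×)⁶ where the expressions are defined, ε₁(e₁^c(x)) = c^{−1}·ε₁(x) and ε₂(e₂^c(x)) = c^{−1}·ε₂(x), where ε₁(x) = x₀/x₁ + x₀x₂/(x₁²x₃) + x₀x₂x₄/(x₁²x₃²x₅) and ε₂(x) = x₁³/x₂ + x₁³x₃³/(x₂²x₄). -/
noncomputable section

/-! Rescaling x₁, x₃, x₅ by A, B, E divides the three monomials a, b, t of ε₁ by A, A²B, A²B²E.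
For the factors 𝒞₁ = p/s, 𝒞₃ = q/p, 𝒞₅ = cs/q (with s = a + b + t, p = ca + b + t,
q = ca + cb + t) these divisors are p/s, pq/s², cq/s, and the claim becomes the polynomial
identity caq + cbs + tp = pq. For ε₂ the divisors are p/s and cp/s, and the claim is p = ca + b. -/

section Field

variable {K : Type*} [Field K] {a b t s p q c : K}

theorem three_terms_div_rescaled_eq_inv_mul (hc : c ≠ 0) (hs₀ : s ≠ 0) (hp₀ : p ≠ 0)
    (hq₀ : q ≠ 0) (hs : s = a + b + t) (hp : p = c * a + b + t) (hq : q = c * a + c * b + t) :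
    a / (p / s) + b / ((p / s) ^ 2 * (q / p)) + t / ((p / s) ^ 2 * (q / p) ^ 2 * (c * s / q))
      = c⁻¹ * s := by
  field_simp
  subst hs hp hq
  ring

theorem two_terms_div_rescaled_eq_inv_mul (hc : c ≠ 0) (hs₀ : s ≠ 0) (hp₀ : p ≠ 0)
    (hs : s = a + b) (hp : p = c * a + b) :
    a / (p / s) + b / ((p / s) ^ 2 * (c * s / p)) = c⁻¹ * s := by
  field_simp
  subst hs hp
  ring

end Field

theorem s1_mul_odd_coords (x : Fin 6 → ℂ) (A B E : ℂ) :
    s1 ![x 0, A * x 1, x 2, B * x 3, x 4, E * x 5] =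
      x 0 / x 1 / A + x 0 * x 2 / (x 1 ^ 2 * x 3) / (A ^ 2 * B)
        + x 0 * x 2 * x 4 / (x 1 ^ 2 * x 3 ^ 2 * x 5) / (A ^ 2 * B ^ 2 * E) := by
  simp only [s1, Matrix.cons_val]
  ring

theorem s2_mul_even_coords (x : Fin 6 → ℂ) (A B : ℂ) :
    s2 ![x 0, x 1, A * x 2, x 3, B * x 4, x 5] =
      x 1 ^ 3 / x 2 / A + x 1 ^ 3 * x 3 ^ 3 / (x 2 ^ 2 * x 4) / (A ^ 2 * B) := by
  simp only [s2, Matrix.cons_val]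
  ring

theorem epsilon_rescale_general (c : ℂ) (hc : c ≠ 0) (x : Fin 6 → ℂ)
    (hs1 : s1 x ≠ 0) (hd3 : d3 c x ≠ 0) (hd5 : d5 c x ≠ 0)
    (hs2 : s2 x ≠ 0) (hd4 : d4 c x ≠ 0) :
    s1 (e1act c x) = c⁻¹ * s1 x ∧ s2 (e2act c x) = c⁻¹ * s2 x := by
  constructor
  · rw [e1act, s1_mul_odd_coords, C1, C3, C5]
    exact three_terms_div_rescaled_eq_inv_mul hc hs1 hd3 hd5 rfl
      (by unfold d3; ring) (by unfold d5; ring)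
  · rw [e2act, s2_mul_even_coords, C2, C4]
    exact two_terms_div_rescaled_eq_inv_mul hc hs2 hd4 rfl (by unfold d4; ring)

/-- ε₁(e₁^c(x)) = c⁻¹·ε₁(x) and ε₂(e₂^c(x)) = c⁻¹·ε₂(x), where
ε₁(x) = x₀/x₁ + x₀x₂/(x₁²x₃) + x₀x₂x₄/(x₁²x₃²x₅) = s1(x) and
ε₂(x) = x₁³/x₂ + x₁³x₃³/(x₂²x₄) = s2(x). -/
theorem epsilon_rescale (c : ℂ) (hc : c ≠ 0) (x : Fin 6 → ℂ) (hx : ∀ i, x i ≠ 0)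
    (hs1 : s1 x ≠ 0) (hd3 : d3 c x ≠ 0) (hd5 : d5 c x ≠ 0)
    (hs2 : s2 x ≠ 0) (hd4 : d4 c x ≠ 0) :
    s1 (e1act c x) = c⁻¹ * s1 x ∧ s2 (e2act c x) = c⁻¹ * s2 x :=
  epsilon_rescale_general c hc x hs1 hd3 hd5 hs2 hd4
end
end
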